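/- arXiv:math/9911026 — 6 statements merged into one kernel-verified Lean document; each statement's English description precedes it below -/
import Mathlib

section
/- For f, g ∈ L²(ℝ) and a > 0, the series ∑_{n∈ℤ} f(t−na)·conj(g(t−na)) converges absolutely for almost every t, and the resulting a-periodic function, restricted to [0,a], belongs to L¹[0,a]. -/
/-!
The product `φ = f · conj g` is integrable by Cauchy–Schwarz, so it suffices to study the
periodization `∑ₙ φ(t - n a)` of an integrable `φ`. The translates of a period cell
`(b, b + a]` by `ℤ a` tile `ℝ`, so by Tonelli `∫_{(b, b+a]} ∑ₙ |φ(t - n a)| dt = ∫_ℝ |φ| < ∞`.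
Hence the series converges absolutely for a.e. `t` in every cell, so a.e. on `ℝ`, and its sum is
dominated by an integrable function on the cell.
-/

open MeasureTheory Set Filter
open scoped ENNReal

/-- The a-inner product: `⟨f,g⟩_a(t) = ∑_{n∈ℤ} f(t−na)·conj(g(t−na))`. -/
noncomputable def aInner (a : ℝ) (f g : ℝ → ℂ) (t : ℝ) : ℂ :=
  ∑' n : ℤ, f (t - n * a) * (starRingEnd ℂ) (g (t - n * a))

namespace MeasureTheory

variable {α ι E : Type*} [MeasurableSpace α] {μ : Measure α} [Countable ι]
  [NormedAddCommGroup E] {f : ι → α → E}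

theorem ae_summable_norm_of_tsum_lintegral_enorm_ne_top (hf : ∀ i, AEStronglyMeasurable (f i) μ)
    (hf' : ∑' i, ∫⁻ x, ‖f i x‖ₑ ∂μ ≠ ∞) :
    ∀ᵐ x ∂μ, Summable fun i => ‖f i x‖ := by
  have hmeas i : AEMeasurable (fun x => ‖f i x‖ₑ) μ := (hf i).enorm
  rw [← lintegral_tsum hmeas] at hf'
  filter_upwards [ae_lt_top' (AEMeasurable.tsum hmeas) hf'] with x hx
  exact tsum_enorm_ne_top_iff_summable_norm.1 hx.ne

theorem integrable_tsum_of_tsum_lintegral_enorm_ne_top [CompleteSpace E]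
    (hf : ∀ i, AEStronglyMeasurable (f i) μ) (hf' : ∑' i, ∫⁻ x, ‖f i x‖ₑ ∂μ ≠ ∞) :
    Integrable (fun x => ∑' i, f i x) μ := by
  refine ⟨aestronglyMeasurable_of_tendsto_ae atTop
    (fun s : Finset ι => s.aestronglyMeasurable_fun_sum fun i _ => hf i) ?_, ?_⟩
  · filter_upwards [ae_summable_norm_of_tsum_lintegral_enorm_ne_top hf hf'] with x hx
    exact hx.of_norm.hasSum
  · calc ∫⁻ x, ‖∑' i, f i x‖ₑ ∂μ ≤ ∫⁻ x, ∑' i, ‖f i x‖ₑ ∂μ :=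
          lintegral_mono fun _ => enorm_tsum_le_tsum_enorm
      _ = ∑' i, ∫⁻ x, ‖f i x‖ₑ ∂μ := lintegral_tsum fun i => (hf i).enorm
      _ < ∞ := hf'.lt_top

end MeasureTheory

section Periodization

variable {E : Type*} [NormedAddCommGroup E] {a : ℝ} {φ : ℝ → E}

theorem tsum_setLIntegral_Ioc_comp_sub_int_mul (ha : 0 < a) (b : ℝ) (h : ℝ → ℝ≥0∞) :
    ∑' n : ℤ, ∫⁻ t in Ioc b (b + a), h (t - n * a) = ∫⁻ t, h t := by
  have translate (n : ℤ) : ∫⁻ t in Ioc b (b + a), h (t - n * a) =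
      ∫⁻ t in Ioc (b + (-n) • a) (b + (-n + 1) • a), h t := by
    have hpre : (· - n * a) ⁻¹' Ioc (b + (-n) • a) (b + (-n + 1) • a) = Ioc b (b + a) := by
      rw [preimage_sub_const_Ioc]
      congr 1 <;> simp only [zsmul_eq_mul] <;> push_cast <;> ring
    rw [← hpre, (measurePreserving_sub_right volume _).setLIntegral_comp_preimage_emb
      (measurableEmbedding_subRight _)]
  rw [tsum_congr translate, tsum_comp_neg fun n => ∫⁻ t in Ioc (b + n • a) (b + (n + 1) • a), h t,
    ← lintegral_iUnion (fun _ => measurableSet_Ioc) (pairwise_disjoint_Ioc_add_zsmul b a),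
    iUnion_Ioc_add_zsmul ha, Measure.restrict_univ]

theorem tsum_setLIntegral_Ioc_enorm_comp_sub_int_mul_ne_top (ha : 0 < a) (hφ : Integrable φ)
    (b : ℝ) : ∑' n : ℤ, ∫⁻ t in Ioc b (b + a), ‖φ (t - n * a)‖ₑ ≠ ∞ := by
  rw [tsum_setLIntegral_Ioc_comp_sub_int_mul ha b (‖φ ·‖ₑ)]
  exact hφ.2.ne

theorem ae_summable_norm_comp_sub_int_mul (ha : 0 < a) (hφ : Integrable φ) :
    ∀ᵐ t, Summable fun n : ℤ => ‖φ (t - n * a)‖ := by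
  have on_Ioc (k : ℤ) : ∀ᵐ t ∂volume.restrict (Ioc (k • a) ((k + 1) • a)),
      Summable fun n : ℤ => ‖φ (t - n * a)‖ := by
    rw [add_one_zsmul]
    exact ae_summable_norm_of_tsum_lintegral_enorm_ne_top
      (fun _ => (hφ.comp_sub_right _).1.restrict)
      (tsum_setLIntegral_Ioc_enorm_comp_sub_int_mul_ne_top ha hφ _)
  simpa only [iUnion_Ioc_zsmul ha, Measure.restrict_univ] using
    (ae_restrict_iUnion_iff _ _).2 on_Ioc

theorem integrableOn_Ioc_tsum_comp_sub_int_mul [CompleteSpace E] (ha : 0 < a)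
    (hφ : Integrable φ) (b : ℝ) :
    IntegrableOn (fun t => ∑' n : ℤ, φ (t - n * a)) (Ioc b (b + a)) :=
  integrable_tsum_of_tsum_lintegral_enorm_ne_top
    (fun _ => (hφ.comp_sub_right _).1.restrict)
    (tsum_setLIntegral_Ioc_enorm_comp_sub_int_mul_ne_top ha hφ b)

end Periodization

/-- For f, g ∈ L²(ℝ) and a > 0, the series defining the a-inner product converges
absolutely for a.e. t, and the resulting function restricted to (0,a] is in L¹. -/
theorem stmt0 (a : ℝ) (ha : 0 < a) (f g : ℝ → ℂ)
    (hf : MemLp f 2 (volume : Measure ℝ)) (hg : MemLp g 2 (volume : Measure ℝ)) :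
    (∀ᵐ t : ℝ ∂volume,
        Summable fun n : ℤ => ‖f (t - n * a) * (starRingEnd ℂ) (g (t - n * a))‖) ∧
      IntegrableOn (aInner a f g) (Set.Ioc 0 a) volume := by
  have hfg : Integrable fun t => f t * starRingEnd ℂ (g t) := by
    exact hf.integrable_mul hg.star
  refine ⟨ae_summable_norm_comp_sub_int_mul (φ := fun t => f t * starRingEnd ℂ (g t)) ha hfg, ?_⟩
  have hIoc := integrableOn_Ioc_tsum_comp_sub_int_mul
    (φ := fun t => f t * starRingEnd ℂ (g t)) ha hfg 0
  rw [zero_add] at hIoc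
  exact hIoc
end

section
/- If g ∈ L²(ℝ), a > 0, and ‖g‖_a(t) = 1 for almost every t, then the family ((1/√a)·E_{m/a} g)_{m∈ℤ} is an orthonormal sequence in L²(ℝ). -/
/-!
The product of the `m`-th and the conjugate `k`-th function is `a⁻¹ e_{m-k}(t) |g t|²`, where
`e_j(t) = exp(2πi j t / a)` is `a`-periodic. Unfolding `ℝ` over the fundamental domain `(0, a]`
of `aℤ` turns its integral into `a⁻¹ ∫_(0,a] e_{m-k}(t) ∑ₙ |g (t - n a)|² dt = a⁻¹ ∫_(0,a] e_{m-k}`,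
which is `1` if `m = k` and `0` otherwise.
-/

open MeasureTheory Function Complex Real

namespace MeasureTheory.IsAddFundamentalDomain

variable {G α E : Type*} [AddGroup G] [Countable G] [AddAction G α] [MeasurableSpace α]
  [MeasurableConstVAdd G α] {μ : Measure α} [VAddInvariantMeasure G α μ] {s : Set α}
  [NormedAddCommGroup E] [NormedSpace ℝ E]

theorem integral_eq_setIntegral_tsum (h : IsAddFundamentalDomain G s μ) {f : α → E}
    (hf : Integrable f μ) : ∫ x, f x ∂μ = ∫ x in s, ∑' g : G, f (g +ᵥ x) ∂μ := by
  rw [h.integral_eq_tsum'' f hf, integral_tsum]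
  · exact fun g ↦ (hf.1.comp_measurePreserving (measurePreserving_vadd g μ)).restrict
  · rw [← h.lintegral_eq_tsum'' fun x ↦ ‖f x‖ₑ]
    exact hf.2.ne

end MeasureTheory.IsAddFundamentalDomain

theorem integral_eq_setIntegral_Ioc_tsum_sub_int_mul {E : Type*} [NormedAddCommGroup E]
    [NormedSpace ℝ E] {a : ℝ} (ha : 0 < a) {f : ℝ → E} (hf : Integrable f) :
    ∫ t, f t = ∫ t in Set.Ioc 0 a, ∑' n : ℤ, f (t - n * a) := by
  let e : ℤ ≃ AddSubgroup.zmultiples a := Equiv.ofBijective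
    (fun n ↦ ⟨-n • a, AddSubgroup.zsmul_mem_zmultiples a _⟩)
    ⟨fun n k hnk ↦ neg_injective ((zsmul_left_strictMono ha).injective (congrArg Subtype.val hnk)),
      fun ⟨_, hx⟩ ↦ by
        obtain ⟨n, rfl⟩ := AddSubgroup.mem_zmultiples_iff.mp hx
        exact ⟨-n, by simp⟩⟩
  rw [(isAddFundamentalDomain_Ioc ha 0 volume).integral_eq_setIntegral_tsum hf, zero_add]
  refine setIntegral_congr_fun measurableSet_Ioc fun t _ ↦ ?_
  rw [← e.tsum_eq]
  congr! 2 with n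
  simp [e, zsmul_eq_mul, sub_eq_neg_add]

theorem Function.Periodic.integral_mul_eq_setIntegral_Ioc_mul_tsum {a : ℝ} (ha : 0 < a)
    {φ h : ℝ → ℂ} (hφ : Periodic φ a) (hint : Integrable fun t ↦ φ t * h t) :
    ∫ t, φ t * h t = ∫ t in Set.Ioc 0 a, φ t * ∑' n : ℤ, h (t - n * a) := by
  rw [integral_eq_setIntegral_Ioc_tsum_sub_int_mul ha hint]
  simp only [hφ.sub_int_mul_eq, tsum_mul_left]

theorem periodic_cexp_two_pi_I_int_div_mul (j : ℤ) {a : ℝ} (ha : a ≠ 0) :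
    Periodic (fun t : ℝ ↦ cexp (2 * π * I * (j / a) * t)) a := fun t ↦ by
  have : 2 * π * I * (j / a) * ↑(t + a) = 2 * π * I * (j / a) * t + j * (2 * π * I) := by
    have : (a : ℂ) ≠ 0 := by exact_mod_cast ha
    push_cast
    field_simp
  simp only [this, Complex.exp_add, Complex.exp_int_mul_two_pi_mul_I, mul_one]

theorem setIntegral_Ioc_cexp_two_pi_I_int_div_mul (j : ℤ) {a : ℝ} (ha : 0 < a) :
    ∫ t in Set.Ioc 0 a, cexp (2 * π * I * (j / a) * t) = if j = 0 then (a : ℂ) else 0 := by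
  rw [← intervalIntegral.integral_of_le ha.le]
  split_ifs with hj
  · simp [hj]
  · have hc : 2 * π * I * (j / a) ≠ 0 := by
      have : (a : ℂ) ≠ 0 := by exact_mod_cast ha.ne'
      simp [hj, this, Real.pi_ne_zero]
    rw [integral_exp_mul_complex hc]
    have hperiod := periodic_cexp_two_pi_I_int_div_mul j ha.ne' 0
    simp only [zero_add] at hperiod
    rw [hperiod, sub_self, zero_div]

theorem modulation_mul_conj_modulation (a : ℝ) (ha : 0 ≤ a) (m k : ℤ) (z : ℂ) (t : ℝ) :
    ((√a : ℂ)⁻¹ * cexp (2 * π * I * (m / a) * t) * z) *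
        (starRingEnd ℂ) ((√a : ℂ)⁻¹ * cexp (2 * π * I * (k / a) * t) * z) =
      (a : ℂ)⁻¹ * (cexp (2 * π * I * ((m - k : ℤ) / a) * t) * (‖z‖ ^ 2 : ℝ)) := by
  have hconj (j : ℤ) : (starRingEnd ℂ) (cexp (2 * π * I * (j / a) * t)) =
      cexp (-(2 * π * I * (j / a) * t)) := by
    rw [← Complex.exp_conj]
    simp [Complex.conj_ofReal, map_ofNat]
  have hsqrt : (√a : ℂ)⁻¹ * (starRingEnd ℂ) (√a : ℂ)⁻¹ = (a : ℂ)⁻¹ := by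
    rw [map_inv₀, Complex.conj_ofReal, ← mul_inv, ← Complex.ofReal_mul, Real.mul_self_sqrt ha]
  have hexp : cexp (2 * π * I * (m / a) * t) * cexp (-(2 * π * I * (k / a) * t)) =
      cexp (2 * π * I * ((m - k : ℤ) / a) * t) := by
    rw [← Complex.exp_add]
    push_cast
    ring_nf
  rw [map_mul, map_mul, hconj, Complex.ofReal_pow, ← Complex.mul_conj', ← hsqrt, ← hexp]
  ring

/-- If `‖g‖_a = 1` a.e., then `((1/√a) E_{m/a} g)_{m∈ℤ}` is orthonormal in L²(ℝ). -/
theorem stmt8 (a : ℝ) (ha : 0 < a) (g : ℝ → ℂ)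
    (hg : MemLp g 2 (volume : Measure ℝ))
    (hnorm : ∀ᵐ t : ℝ ∂volume, ∑' n : ℤ, ‖g (t - n * a)‖ ^ 2 = 1) :
    ∀ m k : ℤ,
      ∫ t : ℝ,
        ((Real.sqrt a : ℂ)⁻¹ *
            Complex.exp (2 * Real.pi * Complex.I * ((m : ℂ) / (a : ℂ)) * (t : ℂ)) * g t) *
          (starRingEnd ℂ)
            ((Real.sqrt a : ℂ)⁻¹ *
              Complex.exp (2 * Real.pi * Complex.I * ((k : ℂ) / (a : ℂ)) * (t : ℂ)) * g t)
        = if m = k then 1 else 0 := by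
  intro m k
  set e : ℝ → ℂ := fun t ↦ cexp (2 * π * I * ((m - k : ℤ) / a) * t)
  have he : Periodic e a := periodic_cexp_two_pi_I_int_div_mul (m - k) ha.ne'
  have hint : Integrable fun t ↦ e t * (‖g t‖ ^ 2 : ℝ) :=
    hg.norm.integrable_sq.ofReal.bdd_mul (c := 1) (by fun_prop)
      (ae_of_all _ fun t ↦ by simp [e, Complex.norm_exp])
  have htsum : ∀ᵐ t, e t * ∑' n : ℤ, ((‖g (t - n * a)‖ ^ 2 : ℝ) : ℂ) = e t := by
    filter_upwards [hnorm] with t ht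
    rw [← Complex.ofReal_tsum, ht, Complex.ofReal_one, mul_one]
  simp only [modulation_mul_conj_modulation a ha.le m k (g _)]
  rw [integral_const_mul, he.integral_mul_eq_setIntegral_Ioc_mul_tsum ha hint,
    setIntegral_congr_ae measurableSet_Ioc (htsum.mono fun t ht _ ↦ ht),
    setIntegral_Ioc_cexp_two_pi_I_int_div_mul _ ha]
  have : (a : ℂ) ≠ 0 := by exact_mod_cast ha.ne'
  simp [sub_eq_zero, apply_ite, this]
end

section
/- Let (g_n)_{n∈ℕ} be an a-orthonormal sequence in L²(ℝ) (⟨g_n,g_k⟩_a = 0 a.e. for n≠k, and ‖g_n‖_a = 1 a.e. on the support of ‖g_n‖_a). Then the family (E_{m/a} g_n)_{m,n∈ℤ×ℕ}, suitably normalized by 1/√a, is an orthonormal system in L²(ℝ). -/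
open MeasureTheory

/-!
Multiplying out, the normalisations contribute `a⁻¹` and the two modulations combine into
`E_{(m-k)/a}`, which is `a`-periodic. Cutting `ℝ` into the translates of the fundamental domain
`(0, a]` of `aℤ` and summing over them turns `∫ E_{(m-k)/a} g_n conj g_j` into
`∫_{(0,a]} E_{(m-k)/a} ⟨g_n, g_j⟩_a`. By `a`-orthonormality the bracket is `δ_{nj}` a.e., and
`∫_{(0,a]} E_{(m-k)/a} = a δ_{mk}`.
-/

open Set Function AddSubgroup Complex ComplexConjugate Real

theorem tsum_zmultiples_eq_tsum_int {α : Type*} [AddCommMonoid α] [TopologicalSpace α]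
    {a : ℝ} (ha : a ≠ 0) (f : ℝ → α) :
    ∑' γ : zmultiples a, f γ = ∑' l : ℤ, f (l * a) := by
  have hbij : Bijective (codRestrict (fun l : ℤ => l • a) (zmultiples a) (zsmul_mem_zmultiples a)) :=
    (Equiv.ofInjective (fun l : ℤ => l • a) (smul_left_injective ℤ ha)).bijective
  simpa [zsmul_eq_mul] using ((Equiv.ofBijective _ hbij).tsum_eq (fun γ => f γ)).symm

theorem integral_eq_setIntegral_Ioc_tsum_sub {E : Type*} [NormedAddCommGroup E] [NormedSpace ℝ E]
    {a : ℝ} (ha : 0 < a) {h : ℝ → E} (hh : Integrable h) :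
    ∫ x, h x = ∫ x in Ioc 0 a, ∑' l : ℤ, h (x - l * a) := by
  have hFD : IsAddFundamentalDomain (zmultiples a) (Ioc 0 a) := by
    simpa using isAddFundamentalDomain_Ioc ha 0
  have hfin : ∑' l : ℤ, ∫⁻ x in Ioc 0 a, ‖h (x - l * a)‖ₑ ≠ ⊤ := by
    have := hFD.lintegral_eq_tsum' (fun x => ‖h x‖ₑ)
    simp only [AddSubgroup.vadd_def, vadd_eq_add, coe_neg, neg_add_eq_sub,
      tsum_zmultiples_eq_tsum_int ha.ne' (fun γ => ∫⁻ x in Ioc 0 a, ‖h (x - γ)‖ₑ)] at this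
    exact this ▸ hh.2.ne
  have hmeas (l : ℤ) : AEStronglyMeasurable (fun x => h (x - l * a)) (volume.restrict (Ioc 0 a)) :=
    (hh.comp_sub_right _).aestronglyMeasurable.restrict
  rw [integral_tsum hmeas hfin, hFD.integral_eq_tsum' h hh]
  simp only [AddSubgroup.vadd_def, vadd_eq_add, coe_neg, neg_add_eq_sub,
    tsum_zmultiples_eq_tsum_int ha.ne' (fun γ => ∫ x in Ioc 0 a, h (x - γ))]

theorem integral_mul_mul_conj_eq_setIntegral_mul_aInner {a C : ℝ} (ha : 0 < a) {e f g : ℝ → ℂ}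
    (he : AEStronglyMeasurable e) (he_bdd : ∀ t, ‖e t‖ ≤ C) (he_per : Periodic e a)
    (hf : MemLp f 2) (hg : MemLp g 2) :
    ∫ t, e t * (f t * conj (g t)) = ∫ t in Ioc 0 a, e t * aInner a f g t := by
  have hF : Integrable (fun t => f t * conj (g t)) := hf.integrable_mul hg.star
  rw [integral_eq_setIntegral_Ioc_tsum_sub ha (hF.bdd_mul he (ae_of_all _ he_bdd))]
  refine setIntegral_congr_fun measurableSet_Ioc fun x _ => ?_
  simp only [he_per.sub_int_mul_eq, tsum_mul_left, aInner]

theorem cexp_two_pi_I_int_div_mul_self {a : ℝ} (ha : a ≠ 0) (c : ℤ) :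
    cexp (2 * π * I * (c / a) * a) = 1 := by
  have ha' : (a : ℂ) ≠ 0 := ofReal_ne_zero.mpr ha
  rw [mul_assoc, div_mul_cancel₀ _ ha', mul_comm, exp_int_mul_two_pi_mul_I]

theorem periodic_cexp_int_div {a : ℝ} (ha : a ≠ 0) (c : ℤ) :
    Periodic (fun t : ℝ => cexp (2 * π * I * (c / a) * t)) a := by
  intro t
  simp only [ofReal_add, mul_add, Complex.exp_add, cexp_two_pi_I_int_div_mul_self ha, mul_one]

theorem norm_cexp_int_div (a : ℝ) (c : ℤ) (t : ℝ) : ‖cexp (2 * π * I * (c / a) * t)‖ = 1 := by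
  rw [show 2 * π * I * (c / a) * t = ((2 * π * (c / a) * t : ℝ) : ℂ) * I by push_cast; ring]
  exact norm_exp_ofReal_mul_I _

theorem setIntegral_Ioc_cexp_int_div {a : ℝ} (ha : 0 < a) (c : ℤ) :
    ∫ t in Ioc 0 a, cexp (2 * π * I * (c / a) * t) = if c = 0 then (a : ℂ) else 0 := by
  rw [← intervalIntegral.integral_of_le ha.le]
  split_ifs with hc
  · simp [hc]
  · have hω : 2 * π * I * (c / a) ≠ 0 := by
      have : (a : ℂ) ≠ 0 := by exact_mod_cast ha.ne'
      simp [hc, this, pi_ne_zero, I_ne_zero]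
    rw [integral_exp_mul_complex hω, cexp_two_pi_I_int_div_mul_self ha.ne']
    simp

theorem modulated_mul_conj_modulated {a : ℝ} (ha : 0 < a) (m k : ℤ) (x y : ℂ) (t : ℝ) :
    ((√a : ℂ)⁻¹ * cexp (2 * π * I * (m / a) * t) * x) *
        conj ((√a : ℂ)⁻¹ * cexp (2 * π * I * (k / a) * t) * y) =
      (a : ℂ)⁻¹ * (cexp (2 * π * I * ((m - k : ℤ) / a) * t) * (x * conj y)) := by
  have hsqrt : (√a : ℂ)⁻¹ * (√a : ℂ)⁻¹ = (a : ℂ)⁻¹ := by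
    rw [← mul_inv, ← ofReal_mul, mul_self_sqrt ha.le]
  have hexp : cexp (2 * π * I * (m / a) * t) * conj (cexp (2 * π * I * (k / a) * t)) =
      cexp (2 * π * I * ((m - k : ℤ) / a) * t) := by
    rw [← exp_conj, ← Complex.exp_add]
    congr 1
    simp only [map_mul, map_div₀, conj_I, conj_ofReal, map_intCast, map_ofNat]
    push_cast
    ring
  simp only [map_mul, map_inv₀, conj_ofReal, ← hsqrt, ← hexp]
  ring

/-- If `(g_n)` is an a-orthonormal sequence, then `((1/√a) E_{m/a} g_n)_{m,n}` is an
orthonormal system in L²(ℝ). -/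
theorem stmt9 (a : ℝ) (ha : 0 < a) (g : ℕ → ℝ → ℂ)
    (hg : ∀ n, MemLp (g n) 2 (volume : Measure ℝ))
    (horth : ∀ n k : ℕ, n ≠ k → ∀ᵐ t : ℝ ∂volume, aInner a (g n) (g k) t = 0)
    (hnorm : ∀ n : ℕ, ∀ᵐ t : ℝ ∂volume, aInner a (g n) (g n) t = 1) :
    ∀ (m k : ℤ) (n j : ℕ),
      ∫ t : ℝ,
        ((Real.sqrt a : ℂ)⁻¹ *
            Complex.exp (2 * Real.pi * Complex.I * ((m : ℂ) / (a : ℂ)) * (t : ℂ)) * g n t) *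
          (starRingEnd ℂ)
            ((Real.sqrt a : ℂ)⁻¹ *
              Complex.exp (2 * Real.pi * Complex.I * ((k : ℂ) / (a : ℂ)) * (t : ℂ)) * g j t)
        = if m = k ∧ n = j then 1 else 0 := by
  intro m k n j
  have h_aInner : ∀ᵐ t, aInner a (g n) (g j) t = if n = j then 1 else 0 := by
    split_ifs with hnj
    · exact hnj ▸ hnorm n
    · exact horth n j hnj
  have he_meas : AEStronglyMeasurable fun t : ℝ => cexp (2 * π * I * ((m - k : ℤ) / a) * t) :=
    (continuous_const.mul continuous_ofReal).cexp.aestronglyMeasurable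
  simp_rw [modulated_mul_conj_modulated ha, integral_const_mul]
  rw [integral_mul_mul_conj_eq_setIntegral_mul_aInner ha he_meas (norm_cexp_int_div a _ · |>.le)
      (periodic_cexp_int_div ha.ne' _) (hg n) (hg j),
    setIntegral_congr_ae measurableSet_Ioc (h_aInner.mono fun t ht _ => by rw [ht]),
    integral_mul_const, setIntegral_Ioc_cexp_int_div ha]
  have ha' : (a : ℂ) ≠ 0 := by exact_mod_cast ha.ne'
  by_cases hmk : m = k <;> by_cases hnj : n = j <;> simp [hmk, hnj, sub_eq_zero, ha']
end

section
/- Bessel's inequality for the a-inner product: if (g_n)_{n∈ℕ} is an a-orthonormal sequence in L²(ℝ), then for every f ∈ L²(ℝ), ∑_{n=1}^∞ |⟨f,g_n⟩_a(t)|² ≤ ⟨f,f⟩_a(t) for almost every t. -/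
open MeasureTheory

/-! For almost every `t`, the samples `k ↦ h (t - k a)` of an `L²` function `h` are square
summable: integrating `∑ₖ ‖h (t - k a)‖²` over one period gives `‖h‖₂²`. Hence `⟨f, g⟩_a(t)` is
the `ℓ²(ℤ)` inner product of the samples of `f` and `g`, the samples of the `g n` form an
orthonormal family once the zero ones are discarded, and Bessel's inequality in `ℓ²(ℤ)` applies
pointwise. -/

open Set ENNReal

section Bessel

variable {𝕜 E ι : Type*} [RCLike 𝕜] [NormedAddCommGroup E] [InnerProductSpace 𝕜 E]

theorem tsum_norm_inner_sq_le_norm_sq_of_orthonormal_on_ne_zero {v : ι → E}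
    (horth : Pairwise fun i j => inner 𝕜 (v i) (v j) = 0)
    (hnorm : ∀ i, inner 𝕜 (v i) (v i) ≠ 0 → inner 𝕜 (v i) (v i) = 1) (x : E) :
    ∑' i, ‖inner 𝕜 (v i) x‖ ^ 2 ≤ ‖x‖ ^ 2 := by
  classical
  set s : Set ι := {i | v i ≠ 0}
  have hs : Orthonormal 𝕜 (fun i : s => v i) := by
    refine orthonormal_iff_ite.2 fun i j => ?_
    split_ifs with hij
    · subst hij
      exact hnorm i (inner_self_ne_zero.2 i.2)
    · exact horth (Subtype.coe_injective.ne hij)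
  have hsupp : Function.support (fun i => ‖inner 𝕜 (v i) x‖ ^ 2) ⊆ s := fun i hi hvi => by
    simp [hvi] at hi
  rw [← tsum_subtype_eq_of_support_subset hsupp]
  exact hs.tsum_inner_products_le x

end Bessel

theorem lintegral_Ioc_tsum_comp_sub_mul {a : ℝ} (ha : 0 < a) (c : ℝ) {G : ℝ → ℝ≥0∞}
    (hG : AEMeasurable G) :
    ∫⁻ t in Ioc c (c + a), ∑' k : ℤ, G (t - k * a) = ∫⁻ s, G s := by
  have htrans (k : ℤ) : ∫⁻ t in Ioc c (c + a), G (t - k * a)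
      = ∫⁻ s in Ioc (c + (-k) • a) (c + (-k + 1) • a), G s := by
    rw [← (measurePreserving_sub_right volume ((k : ℝ) * a)).setLIntegral_comp_preimage_emb
      (MeasurableEquiv.subRight _).measurableEmbedding G, preimage_sub_const_Ioc]
    congr 3 <;> simp only [zsmul_eq_mul] <;> push_cast <;> ring
  rw [lintegral_tsum (f := fun k t => G (t - (k : ℤ) * a)) fun k =>
    (hG.comp_quasiMeasurePreserving
      (measurePreserving_sub_right volume _).quasiMeasurePreserving).restrict]
  simp only [htrans]
  rw [tsum_comp_neg (fun m : ℤ => ∫⁻ s in Ioc (c + m • a) (c + (m + 1) • a), G s),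
    ← lintegral_iUnion (fun _ => measurableSet_Ioc) (pairwise_disjoint_Ioc_add_zsmul c a),
    iUnion_Ioc_add_zsmul ha, Measure.restrict_univ]

theorem ae_memℓp_two_comp_sub_mul {E : Type*} [NormedAddCommGroup E] {a : ℝ} (ha : 0 < a)
    {h : ℝ → E} (hh : MemLp h 2) :
    ∀ᵐ t, Memℓp (fun k : ℤ => h (t - k * a)) 2 := by
  set G : ℝ → ℝ≥0∞ := fun s => ‖h s‖ₑ ^ 2
  have hG : AEMeasurable G := hh.1.enorm.pow_const 2
  have hGint : ∫⁻ s, G s ≠ ∞ := by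
    have := (eLpNorm_lt_top_iff_lintegral_rpow_enorm_lt_top two_ne_zero ofNat_ne_top).1 hh.2
    simpa [G] using this.ne
  have hfin (j : ℤ) : ∀ᵐ t ∂volume.restrict (Ioc (0 + j • a) (0 + (j + 1) • a)),
      ∑' k : ℤ, G (t - k * a) < ∞ := by
    refine ae_lt_top' (AEMeasurable.tsum fun k => ?_) ?_
    · exact (hG.comp_quasiMeasurePreserving
        (measurePreserving_sub_right volume _).quasiMeasurePreserving).restrict
    · rw [add_one_zsmul, ← add_assoc, lintegral_Ioc_tsum_comp_sub_mul ha _ hG]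
      exact hGint
  have := (ae_restrict_iUnion_iff _ _).2 hfin
  rw [iUnion_Ioc_add_zsmul ha, Measure.restrict_univ] at this
  filter_upwards [this] with t ht
  simp only [G, enorm_eq_nnnorm, ← ENNReal.coe_pow] at ht
  refine (memℓp_gen_iff (by norm_num)).2 ?_
  simpa [Real.rpow_two] using ENNReal.tsum_coe_ne_top_iff_summable_coe.1 ht.ne

theorem aInner_eq_inner_lp {a t : ℝ} {f g : ℝ → ℂ} (hf : Memℓp (fun k : ℤ => f (t - k * a)) 2)
    (hg : Memℓp (fun k : ℤ => g (t - k * a)) 2) :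
    aInner a f g t = inner ℂ (⟨_, hg⟩ : lp (fun _ : ℤ => ℂ) 2) ⟨_, hf⟩ := by
  rw [lp.inner_eq_tsum]
  simp [aInner, mul_comm]

/-- Bessel's inequality for the a-inner product. -/
theorem stmt10 (a : ℝ) (ha : 0 < a) (g : ℕ → ℝ → ℂ)
    (hg : ∀ n, MemLp (g n) 2 (volume : Measure ℝ))
    (horth : ∀ n k : ℕ, n ≠ k → ∀ᵐ t : ℝ ∂volume, aInner a (g n) (g k) t = 0)
    (hnorm : ∀ n : ℕ, ∀ᵐ t : ℝ ∂volume,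
      aInner a (g n) (g n) t ≠ 0 → aInner a (g n) (g n) t = 1)
    (f : ℝ → ℂ) (hf : MemLp f 2 (volume : Measure ℝ)) :
    ∀ᵐ t : ℝ ∂volume,
      ∑' n : ℕ, ‖aInner a f (g n) t‖ ^ 2 ≤ (aInner a f f t).re := by
  have horth_ae : ∀ᵐ t, Pairwise fun n k => aInner a (g n) (g k) t = 0 := by
    simpa only [Pairwise, ae_all_iff, Filter.eventually_imp_distrib_left] using horth
  filter_upwards [ae_memℓp_two_comp_sub_mul ha hf,
    ae_all_iff.2 fun n => ae_memℓp_two_comp_sub_mul ha (hg n), horth_ae, ae_all_iff.2 hnorm]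
    with t hft hgt horth_t hnorm_t
  have hbessel := tsum_norm_inner_sq_le_norm_sq_of_orthonormal_on_ne_zero (𝕜 := ℂ)
    (v := fun n => (⟨_, hgt n⟩ : lp (fun _ : ℤ => ℂ) 2))
    (fun n k hnk => (aInner_eq_inner_lp (hgt k) (hgt n)).symm.trans (horth_t hnk.symm))
    (fun n => by simpa only [aInner_eq_inner_lp (hgt n) (hgt n)] using hnorm_t n) ⟨_, hft⟩
  rw [aInner_eq_inner_lp hft hft, ← RCLike.re_to_complex, inner_self_eq_norm_sq]
  simpa only [aInner_eq_inner_lp hft (hgt _)] using hbessel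
end

section
/- If g ∈ L²(ℝ) is a-bounded, i.e. ⟨g,g⟩_a ≤ B a.e. for some B > 0, then for every f ∈ L²(ℝ), the function ⟨f,g⟩_a restricted to [0,a] belongs to L²[0,a] with ‖⟨f,g⟩_a‖²_{L²[0,a]} ≤ B‖f‖²_{L²(ℝ)}, and moreover the function ⟨f,g⟩_a · g belongs to L²(ℝ) with ‖⟨f,g⟩_a · g‖²_{L²(ℝ)} ≤ B²‖f‖²_{L²(ℝ)}. -/
/-!
For `φ ≥ 0` let `P φ t = ∑ₙ φ (t - n a)` be its `a`-periodisation; integrating `P φ` over one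
period gives `∫ φ`. Cauchy–Schwarz in the sum over `n` gives
`|⟨f,g⟩_a|² ≤ P |f|² · P |g|² ≤ B · P |f|²`, and integrating over `(0, a]` yields the first bound.
For the second, `|⟨f,g⟩_a · g|² ≤ B · P |f|² · |g|²`, and since `P |f|²` is periodic the integral
of `P |f|² · |g|²` over `ℝ` folds to `∫₀ᵃ P |f|² · P |g|² ≤ B ∫ |f|²`.
All estimates are carried out in `ℝ≥0∞`, where no summability has to be checked.
-/

open MeasureTheory

open Set
open scoped ENNReal

section L2

variable {α E : Type*} [MeasurableSpace α] {μ : Measure α} [NormedAddCommGroup E] {h : α → E}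

theorem memLp_two_iff_lintegral_enorm_sq_lt_top (hh : AEStronglyMeasurable h μ) :
    MemLp h 2 μ ↔ ∫⁻ x, ‖h x‖ₑ ^ 2 ∂μ < ∞ := by
  rw [memLp_two_iff_integrable_sq_norm hh, Integrable, and_iff_right (by fun_prop),
    hasFiniteIntegral_iff_enorm]
  simp [enorm_pow]

theorem integral_norm_sq_eq_toReal_lintegral (hh : AEStronglyMeasurable h μ) :
    ∫ x, ‖h x‖ ^ 2 ∂μ = (∫⁻ x, ‖h x‖ₑ ^ 2 ∂μ).toReal := by
  simpa [enorm_pow] using integral_norm_eq_lintegral_enorm (hh.norm.pow 2)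

theorem memLp_two_and_integral_norm_sq_le_of_lintegral_le {β F : Type*} [MeasurableSpace β]
    {ν : Measure β} [NormedAddCommGroup F] {f : β → F} (hh : AEStronglyMeasurable h μ)
    (hf : MemLp f 2 ν) {C : ℝ} (hC : 0 ≤ C)
    (hle : ∫⁻ x, ‖h x‖ₑ ^ 2 ∂μ ≤ ENNReal.ofReal C * ∫⁻ y, ‖f y‖ₑ ^ 2 ∂ν) :
    MemLp h 2 μ ∧ ∫ x, ‖h x‖ ^ 2 ∂μ ≤ C * ∫ y, ‖f y‖ ^ 2 ∂ν := by
  have hfin := (memLp_two_iff_lintegral_enorm_sq_lt_top hf.aestronglyMeasurable).1 hf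
  refine ⟨(memLp_two_iff_lintegral_enorm_sq_lt_top hh).2
    (hle.trans_lt (ENNReal.mul_lt_top ENNReal.ofReal_lt_top hfin)), ?_⟩
  rw [integral_norm_sq_eq_toReal_lintegral hh,
    integral_norm_sq_eq_toReal_lintegral hf.aestronglyMeasurable,
    ← ENNReal.toReal_ofReal hC, ← ENNReal.toReal_mul]
  exact ENNReal.toReal_mono (ENNReal.mul_ne_top ENNReal.ofReal_ne_top hfin.ne) hle

end L2

theorem ENNReal.tsum_mul_sq_le_sq_mul_sq {ι : Type*} (x y : ι → ℝ≥0∞) :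
    (∑' i, x i * y i) ^ 2 ≤ (∑' i, x i ^ 2) * ∑' i, y i ^ 2 := by
  let _ : MeasurableSpace ι := ⊤
  have h := ENNReal.lintegral_mul_le_Lp_mul_Lq (Measure.count : Measure ι) .two_two
    (measurable_from_top (f := x)).aemeasurable (measurable_from_top (f := y)).aemeasurable
  simp only [Pi.mul_apply, lintegral_count, ENNReal.rpow_two] at h
  calc (∑' i, x i * y i) ^ 2
      ≤ ((∑' i, x i ^ 2) ^ (1 / 2 : ℝ) * (∑' i, y i ^ 2) ^ (1 / 2 : ℝ)) ^ 2 := pow_le_pow_left' h 2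
    _ = (∑' i, x i ^ 2) * ∑' i, y i ^ 2 := by
        simp only [mul_pow, ← ENNReal.rpow_two, ← ENNReal.rpow_mul]
        norm_num

noncomputable def periodicSum (a : ℝ) (φ : ℝ → ℝ≥0∞) (t : ℝ) : ℝ≥0∞ :=
  ∑' n : ℤ, φ (t - n * a)

section periodicSum

variable {a : ℝ} {φ : ℝ → ℝ≥0∞}

theorem periodic_periodicSum (a : ℝ) (φ : ℝ → ℝ≥0∞) : Function.Periodic (periodicSum a φ) a := by
  intro t
  calc ∑' n : ℤ, φ (t + a - n * a) = ∑' n : ℤ, φ (t - ((n - 1 : ℤ) : ℝ) * a) :=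
        tsum_congr fun n => by push_cast; ring_nf
    _ = periodicSum a φ t := (Equiv.subRight 1).tsum_eq fun n : ℤ => φ (t - n * a)

theorem periodicSum_mul_of_periodic {ψ : ℝ → ℝ≥0∞} (hψ : Function.Periodic ψ a) (t : ℝ) :
    periodicSum a (fun s => ψ s * φ s) t = ψ t * periodicSum a φ t := by
  simp only [periodicSum, hψ.sub_int_mul_eq, ENNReal.tsum_mul_left]

theorem AEMeasurable.periodicSum (hφ : AEMeasurable φ) : AEMeasurable (periodicSum a φ) :=
  AEMeasurable.tsum fun _ => hφ.comp_quasiMeasurePreserving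
    (measurePreserving_sub_right volume _).quasiMeasurePreserving

theorem lintegral_Ioc_periodicSum (ha : 0 < a) (hφ : AEMeasurable φ) (c : ℝ) :
    ∫⁻ t in Ioc c (c + a), periodicSum a φ t = ∫⁻ t, φ t := by
  have htranslate (n : ℤ) : ∫⁻ t in Ioc c (c + a), φ (t - n * a)
      = ∫⁻ t in Ioc (c + (-n) • a) (c + (-n + 1) • a), φ t := by
    have hpre : (· - (n : ℝ) * a) ⁻¹' Ioc (c + (-n) • a) (c + (-n + 1) • a) = Ioc c (c + a) := by
      rw [preimage_sub_const_Ioc]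
      congr 1 <;> simp only [zsmul_eq_mul] <;> push_cast <;> ring
    rw [← hpre, (measurePreserving_sub_right volume _).setLIntegral_comp_preimage_emb
      (measurableEmbedding_subRight _)]
  calc ∫⁻ t in Ioc c (c + a), periodicSum a φ t
      = ∑' n : ℤ, ∫⁻ t in Ioc c (c + a), φ (t - n * a) :=
        lintegral_tsum fun n => (hφ.comp_quasiMeasurePreserving
          (measurePreserving_sub_right volume _).quasiMeasurePreserving).restrict
    _ = ∑' n : ℤ, ∫⁻ t in Ioc (c + n • a) (c + (n + 1) • a), φ t := by
        simp_rw [htranslate]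
        exact (Equiv.neg ℤ).tsum_eq fun n => ∫⁻ t in Ioc (c + n • a) (c + (n + 1) • a), φ t
    _ = ∫⁻ t, φ t := by
        rw [← lintegral_iUnion (fun _ => measurableSet_Ioc) (pairwise_disjoint_Ioc_add_zsmul c a),
          iUnion_Ioc_add_zsmul ha, Measure.restrict_univ]

theorem ae_periodicSum_lt_top (ha : 0 < a) (hφ : AEMeasurable φ) (hfin : ∫⁻ t, φ t ≠ ∞) :
    ∀ᵐ t, periodicSum a φ t < ∞ := by
  rw [← Measure.restrict_univ (μ := volume), ← iUnion_Ioc_add_zsmul ha 0, ae_restrict_iUnion_iff]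
  intro n
  rw [add_one_zsmul, ← add_assoc]
  refine ae_lt_top' hφ.periodicSum.restrict ?_
  rwa [lintegral_Ioc_periodicSum ha hφ]

theorem Function.Periodic.lintegral_mul_eq_setLIntegral_Ioc {ψ : ℝ → ℝ≥0∞}
    (hψ : Function.Periodic ψ a) (ha : 0 < a) (hψm : AEMeasurable ψ) (hφ : AEMeasurable φ)
    (c : ℝ) : ∫⁻ t, ψ t * φ t = ∫⁻ t in Ioc c (c + a), ψ t * periodicSum a φ t := by
  rw [← lintegral_Ioc_periodicSum ha (φ := fun t => ψ t * φ t) (hψm.mul hφ) c]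
  simp_rw [periodicSum_mul_of_periodic hψ]

end periodicSum

section aInner

variable {a : ℝ} {f g : ℝ → ℂ}

theorem enorm_aInner_sq_le (a : ℝ) (f g : ℝ → ℂ) (t : ℝ) :
    ‖aInner a f g t‖ₑ ^ 2
      ≤ periodicSum a (‖f ·‖ₑ ^ 2) t * periodicSum a (‖g ·‖ₑ ^ 2) t := by
  calc ‖aInner a f g t‖ₑ ^ 2 ≤ (∑' n : ℤ, ‖f (t - n * a)‖ₑ * ‖g (t - n * a)‖ₑ) ^ 2 := by
        gcongr
        refine enorm_tsum_le_tsum_enorm.trans_eq (tsum_congr fun n => ?_)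
        rw [enorm_mul, RCLike.enorm_conj]
    _ ≤ _ := ENNReal.tsum_mul_sq_le_sq_mul_sq _ _

theorem MeasureTheory.AEStronglyMeasurable.aInner (hf : AEStronglyMeasurable f)
    (hg : AEStronglyMeasurable g) :
    AEStronglyMeasurable (aInner a f g) := by
  have hshift {h : ℝ → ℂ} (hh : AEStronglyMeasurable h) (d : ℝ) :
      AEStronglyMeasurable (fun t => h (t - d)) :=
    hh.comp_quasiMeasurePreserving (measurePreserving_sub_right volume d).quasiMeasurePreserving
  exact AEStronglyMeasurable.tsum fun n => (hshift hf _).mul (hshift hg _).star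

theorem periodicSum_enorm_sq_le_ofReal {B : ℝ} (hB : 0 ≤ B) {t : ℝ}
    (hfin : periodicSum a (‖g ·‖ₑ ^ 2) t ≠ ∞) (hbd : ∑' n : ℤ, ‖g (t - n * a)‖ ^ 2 ≤ B) :
    periodicSum a (‖g ·‖ₑ ^ 2) t ≤ ENNReal.ofReal B := by
  rw [ENNReal.le_ofReal_iff_toReal_le hfin hB, periodicSum,
    ENNReal.tsum_toReal_eq fun _ => by finiteness]
  simpa only [ENNReal.toReal_pow, toReal_enorm] using hbd

variable {C : ℝ≥0∞}

theorem setLIntegral_Ioc_enorm_aInner_sq_le (ha : 0 < a) (hf : AEStronglyMeasurable f)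
    (hbd : ∀ᵐ t, periodicSum a (‖g ·‖ₑ ^ 2) t ≤ C) :
    ∫⁻ t in Ioc 0 a, ‖aInner a f g t‖ₑ ^ 2 ≤ C * ∫⁻ t, ‖f t‖ₑ ^ 2 := by
  have hf2 : AEMeasurable (‖f ·‖ₑ ^ 2) := hf.enorm.pow_const 2
  calc ∫⁻ t in Ioc 0 a, ‖aInner a f g t‖ₑ ^ 2
      ≤ ∫⁻ t in Ioc 0 a, C * periodicSum a (‖f ·‖ₑ ^ 2) t := by
        refine lintegral_mono_ae ?_
        filter_upwards [ae_restrict_of_ae hbd] with t ht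
        calc ‖aInner a f g t‖ₑ ^ 2 ≤ _ := enorm_aInner_sq_le a f g t
          _ ≤ _ := by rw [mul_comm]; gcongr
    _ = C * ∫⁻ t, ‖f t‖ₑ ^ 2 := by
        rw [lintegral_const_mul'' _ hf2.periodicSum.restrict, ← lintegral_Ioc_periodicSum ha hf2 0,
          zero_add]

theorem lintegral_enorm_aInner_mul_sq_le (ha : 0 < a) (hf : AEStronglyMeasurable f)
    (hg : AEStronglyMeasurable g) (hbd : ∀ᵐ t, periodicSum a (‖g ·‖ₑ ^ 2) t ≤ C) :
    ∫⁻ t, ‖aInner a f g t * g t‖ₑ ^ 2 ≤ C * (C * ∫⁻ t, ‖f t‖ₑ ^ 2) := by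
  have hf2 : AEMeasurable (‖f ·‖ₑ ^ 2) := hf.enorm.pow_const 2
  have hg2 : AEMeasurable (‖g ·‖ₑ ^ 2) := hg.enorm.pow_const 2
  set Pf := periodicSum a (‖f ·‖ₑ ^ 2)
  calc ∫⁻ t, ‖aInner a f g t * g t‖ₑ ^ 2 ≤ ∫⁻ t, C * (Pf t * ‖g t‖ₑ ^ 2) := by
        refine lintegral_mono_ae ?_
        filter_upwards [hbd] with t ht
        calc ‖aInner a f g t * g t‖ₑ ^ 2 = ‖aInner a f g t‖ₑ ^ 2 * ‖g t‖ₑ ^ 2 := by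
              rw [enorm_mul, mul_pow]
          _ ≤ Pf t * periodicSum a (‖g ·‖ₑ ^ 2) t * ‖g t‖ₑ ^ 2 := by
              gcongr; exact enorm_aInner_sq_le a f g t
          _ = Pf t * ‖g t‖ₑ ^ 2 * periodicSum a (‖g ·‖ₑ ^ 2) t := by ring
          _ ≤ Pf t * ‖g t‖ₑ ^ 2 * C := by gcongr
          _ = C * (Pf t * ‖g t‖ₑ ^ 2) := mul_comm _ _
    _ = C * ∫⁻ t in Ioc 0 a, Pf t * periodicSum a (‖g ·‖ₑ ^ 2) t := by
        rw [lintegral_const_mul'' (f := fun t => Pf t * ‖g t‖ₑ ^ 2) _ (hf2.periodicSum.mul hg2),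
          (periodic_periodicSum a _).lintegral_mul_eq_setLIntegral_Ioc ha hf2.periodicSum hg2 0,
          zero_add]
    _ ≤ C * ∫⁻ t in Ioc 0 a, Pf t * C := by
        refine mul_le_mul_right (lintegral_mono_ae ?_) C
        filter_upwards [ae_restrict_of_ae hbd] with t ht
        gcongr
    _ = C * (C * ∫⁻ t, ‖f t‖ₑ ^ 2) := by
        rw [lintegral_mul_const'' _ hf2.periodicSum.restrict, mul_comm _ C,
          ← lintegral_Ioc_periodicSum ha hf2 0, zero_add]

end aInner

/-- If g is a-bounded (`⟨g,g⟩_a ≤ B` a.e.), then `⟨f,g⟩_a ∈ L²[0,a]` with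
`‖⟨f,g⟩_a‖² ≤ B‖f‖²`, and `⟨f,g⟩_a · g ∈ L²(ℝ)` with `‖⟨f,g⟩_a·g‖² ≤ B²‖f‖²`. -/
theorem stmt11 (a : ℝ) (ha : 0 < a) (g : ℝ → ℂ) (B : ℝ) (hB : 0 < B)
    (hg : MemLp g 2 (volume : Measure ℝ))
    (hbd : ∀ᵐ t : ℝ ∂volume, ∑' n : ℤ, ‖g (t - n * a)‖ ^ 2 ≤ B)
    (f : ℝ → ℂ) (hf : MemLp f 2 (volume : Measure ℝ)) :
    MemLp (aInner a f g) 2 ((volume : Measure ℝ).restrict (Set.Ioc 0 a)) ∧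
      (∫ t in Set.Ioc 0 a, ‖aInner a f g t‖ ^ 2) ≤ B * ∫ t : ℝ, ‖f t‖ ^ 2 ∧
      MemLp (fun t => aInner a f g t * g t) 2 (volume : Measure ℝ) ∧
      (∫ t : ℝ, ‖aInner a f g t * g t‖ ^ 2) ≤ B ^ 2 * ∫ t : ℝ, ‖f t‖ ^ 2 := by
  have hfm := hf.aestronglyMeasurable
  have hgm := hg.aestronglyMeasurable
  -- `hbd` is void where the real series diverges (its `tsum` is then `0`), so finiteness of the
  -- periodisation of `‖g‖²` has to come from `g ∈ L²`.
  have hg_fin : ∀ᵐ t, periodicSum a (‖g ·‖ₑ ^ 2) t < ∞ :=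
    ae_periodicSum_lt_top ha (hgm.enorm.pow_const 2)
      ((memLp_two_iff_lintegral_enorm_sq_lt_top hgm).1 hg).ne
  have hbd' : ∀ᵐ t, periodicSum a (‖g ·‖ₑ ^ 2) t ≤ ENNReal.ofReal B := by
    filter_upwards [hg_fin, hbd] with t hfin ht
    exact periodicSum_enorm_sq_le_ofReal hB.le hfin.ne ht
  have hB2 : ENNReal.ofReal (B ^ 2) = ENNReal.ofReal B * ENNReal.ofReal B := by
    rw [ENNReal.ofReal_pow hB.le, sq]
  obtain ⟨hmem₁, hle₁⟩ := memLp_two_and_integral_norm_sq_le_of_lintegral_le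
    (hfm.aInner hgm).restrict hf hB.le (setLIntegral_Ioc_enorm_aInner_sq_le ha hfm hbd')
  obtain ⟨hmem₂, hle₂⟩ := memLp_two_and_integral_norm_sq_le_of_lintegral_le
    ((hfm.aInner hgm).mul hgm) hf (sq_nonneg B)
    ((lintegral_enorm_aInner_mul_sq_le ha hfm hgm hbd').trans_eq (by rw [hB2, mul_assoc]))
  exact ⟨hmem₁, hle₁, hmem₂, hle₂⟩
end

section
/- Fix g ∈ L²(ℝ) and a > 0. The linear operator L : L²(ℝ) → L¹[0,a] defined by L(f) = ⟨f,g⟩_a|_{[0,a]} is bounded with operator norm ‖L‖ = ‖g‖_{L²(ℝ)}. -/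
/-!
The interval `(0, a]` tiles `ℝ` under translation by `aℤ`, so integrating the
periodization `∑ₙ F (t - n a)` over one period gives `∫ F` over `ℝ`. Bounding `|⟨f, g⟩_a|`
pointwise by the periodization of `|f| |g|` and applying Cauchy–Schwarz gives
`‖L f‖₁ ≤ ‖g‖₂ ‖f‖₂`. For `f = g` the bracket `⟨g, g⟩_a` is itself the periodization of
`|g|²`, so `‖L g‖₁ = ‖g‖₂²` and no constant smaller than `‖g‖₂` works.
-/

open MeasureTheory

open Set
open scoped ENNReal

lemma tsum_zmultiples_eq_tsum_int_s12 {M : Type*} [AddCommMonoid M] [TopologicalSpace M]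
    {T : ℝ} (hT : T ≠ 0) (φ : ℝ → M) :
    ∑' γ : AddSubgroup.zmultiples T, φ γ = ∑' n : ℤ, φ (n * T) := by
  let e : ℤ ≃ AddSubgroup.zmultiples T :=
    Equiv.ofInjective (· • T) (smul_left_injective ℤ hT)
  rw [← e.tsum_eq]
  exact tsum_congr fun n ↦ congrArg φ (zsmul_eq_mul T n)

lemma lintegral_eq_tsum_setLIntegral_Ioc_sub {T : ℝ} (hT : 0 < T) (c : ℝ) (F : ℝ → ℝ≥0∞) :
    ∫⁻ x, F x = ∑' n : ℤ, ∫⁻ x in Ioc c (c + T), F (x - n * T) := by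
  refine ((isAddFundamentalDomain_Ioc hT c).lintegral_eq_tsum'' F).trans ?_
  refine (tsum_zmultiples_eq_tsum_int_s12 hT.ne'
    fun y ↦ ∫⁻ x in Ioc c (c + T), F (y + x)).trans ?_
  rw [← (Equiv.neg ℤ).tsum_eq]
  simp [neg_add_eq_sub]

lemma integral_eq_tsum_setIntegral_Ioc_sub {E : Type*} [NormedAddCommGroup E]
    [NormedSpace ℝ E] {T : ℝ} (hT : 0 < T) (c : ℝ) {F : ℝ → E} (hF : Integrable F) :
    ∫ x, F x = ∑' n : ℤ, ∫ x in Ioc c (c + T), F (x - n * T) := by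
  refine ((isAddFundamentalDomain_Ioc hT c).integral_eq_tsum'' F hF).trans ?_
  refine (tsum_zmultiples_eq_tsum_int_s12 hT.ne'
    fun y ↦ ∫ x in Ioc c (c + T), F (y + x)).trans ?_
  rw [← (Equiv.neg ℤ).tsum_eq]
  simp [neg_add_eq_sub]

lemma setLIntegral_Ioc_tsum_sub {T : ℝ} (hT : 0 < T) (c : ℝ) {F : ℝ → ℝ≥0∞}
    (hF : AEMeasurable F) :
    ∫⁻ t in Ioc c (c + T), ∑' n : ℤ, F (t - n * T) = ∫⁻ x, F x := by
  rw [lintegral_tsum fun n ↦ ?_, lintegral_eq_tsum_setLIntegral_Ioc_sub hT c]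
  exact (hF.comp_quasiMeasurePreserving
    (measurePreserving_sub_right volume _).quasiMeasurePreserving).mono_measure
      Measure.restrict_le_self

lemma setIntegral_Ioc_tsum_sub {E : Type*} [NormedAddCommGroup E] [NormedSpace ℝ E]
    {T : ℝ} (hT : 0 < T) (c : ℝ) {F : ℝ → E} (hF : Integrable F) :
    ∫ t in Ioc c (c + T), ∑' n : ℤ, F (t - n * T) = ∫ x, F x := by
  have hshift (n : ℤ) :
      AEStronglyMeasurable (fun t ↦ F (t - n * T)) (volume.restrict (Ioc c (c + T))) :=
    (hF.1.comp_quasiMeasurePreserving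
      (measurePreserving_sub_right volume _).quasiMeasurePreserving).mono_measure
        Measure.restrict_le_self
  rw [integral_tsum hshift, integral_eq_tsum_setIntegral_Ioc_sub hT c hF]
  rw [← lintegral_tsum fun n ↦ (hshift n).enorm, setLIntegral_Ioc_tsum_sub hT c hF.1.enorm]
  exact hF.2.ne

lemma lintegral_enorm_mul_le_eLpNorm_mul_eLpNorm {α E F : Type*} [MeasurableSpace α]
    {μ : Measure α} [NormedAddCommGroup E] [NormedAddCommGroup F] {p q : ℝ≥0∞}
    [ENNReal.HolderTriple p q 1] {f : α → E} {g : α → F} (hf : AEStronglyMeasurable f μ)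
    (hg : AEStronglyMeasurable g μ) :
    ∫⁻ x, ‖f x‖ₑ * ‖g x‖ₑ ∂μ ≤ eLpNorm f p μ * eLpNorm g q μ := by
  simpa [eLpNorm_one_eq_lintegral_enorm, enorm_mul] using
    eLpNorm_smul_le_mul_eLpNorm (r := 1) hg.norm hf.norm

lemma toReal_eLpNorm_two {α E : Type*} [MeasurableSpace α] {μ : Measure α}
    [NormedAddCommGroup E] {f : α → E} (hf : AEStronglyMeasurable f μ) :
    (eLpNorm f 2 μ).toReal = √(∫ x, ‖f x‖ ^ 2 ∂μ) := by
  rw [toReal_eLpNorm hf,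
    lpNorm_eq_integral_norm_rpow_toReal two_ne_zero ENNReal.ofNat_ne_top hf]
  simp [Real.sqrt_eq_rpow]

lemma enorm_aInner_le (a : ℝ) (f g : ℝ → ℂ) (t : ℝ) :
    ‖aInner a f g t‖ₑ ≤ ∑' n : ℤ, ‖f (t - n * a)‖ₑ * ‖g (t - n * a)‖ₑ :=
  enorm_tsum_le_tsum_enorm.trans_eq (by simp [enorm_mul])

lemma aInner_self (a : ℝ) (g : ℝ → ℂ) (t : ℝ) :
    aInner a g g t = ((∑' n : ℤ, ‖g (t - n * a)‖ ^ 2 : ℝ) : ℂ) := by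
  rw [aInner, Complex.ofReal_tsum]
  refine tsum_congr fun n ↦ ?_
  rw [Complex.mul_conj, Complex.normSq_eq_norm_sq, Complex.ofReal_pow]

lemma norm_aInner_self (a : ℝ) (g : ℝ → ℂ) (t : ℝ) :
    ‖aInner a g g t‖ = ∑' n : ℤ, ‖g (t - n * a)‖ ^ 2 := by
  rw [aInner_self, Complex.norm_real, Real.norm_of_nonneg (tsum_nonneg fun _ ↦ by positivity)]

lemma setIntegral_Ioc_norm_aInner_le {a : ℝ} (ha : 0 < a) {f g : ℝ → ℂ}
    (hf : MemLp f 2) (hg : MemLp g 2) :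
    ∫ t in Ioc 0 a, ‖aInner a f g t‖ ≤ √(∫ t, ‖g t‖ ^ 2) * √(∫ t, ‖f t‖ ^ 2) := by
  have hlint :
      ∫⁻ t in Ioc 0 a, ‖aInner a f g t‖ₑ ≤ eLpNorm f 2 volume * eLpNorm g 2 volume :=
    calc ∫⁻ t in Ioc 0 a, ‖aInner a f g t‖ₑ
        ≤ ∫⁻ t in Ioc 0 a, ∑' n : ℤ, ‖f (t - n * a)‖ₑ * ‖g (t - n * a)‖ₑ :=
          lintegral_mono fun t ↦ enorm_aInner_le a f g t
      _ = ∫⁻ t, ‖f t‖ₑ * ‖g t‖ₑ := by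
          have h := setLIntegral_Ioc_tsum_sub ha 0 (hf.1.enorm.mul hg.1.enorm)
          rwa [zero_add] at h
      _ ≤ _ := lintegral_enorm_mul_le_eLpNorm_mul_eLpNorm hf.1 hg.1
  calc ∫ t in Ioc 0 a, ‖aInner a f g t‖
      ≤ (∫⁻ t in Ioc 0 a, ‖aInner a f g t‖ₑ).toReal := by
        simpa only [norm_norm, ofReal_norm] using
          (Real.le_norm_self _).trans
            (norm_integral_le_lintegral_norm fun t ↦ ‖aInner a f g t‖)
    _ ≤ (eLpNorm f 2 volume * eLpNorm g 2 volume).toReal :=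
        ENNReal.toReal_mono (ENNReal.mul_ne_top hf.2.ne hg.2.ne) hlint
    _ = √(∫ t, ‖g t‖ ^ 2) * √(∫ t, ‖f t‖ ^ 2) := by
        rw [ENNReal.toReal_mul, toReal_eLpNorm_two hf.1, toReal_eLpNorm_two hg.1, mul_comm]

lemma setIntegral_Ioc_norm_aInner_self {a : ℝ} (ha : 0 < a) {g : ℝ → ℂ} (hg : MemLp g 2) :
    ∫ t in Ioc 0 a, ‖aInner a g g t‖ = ∫ t, ‖g t‖ ^ 2 := by
  simp_rw [norm_aInner_self]
  simpa only [zero_add] using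
    setIntegral_Ioc_tsum_sub ha 0 (hg.integrable_norm_pow two_ne_zero)

/-- The operator `L f = ⟨f,g⟩_a : L²(ℝ) → L¹[0,a]` is bounded with norm `‖g‖_{L²(ℝ)}`:
`‖g‖₂` is the least constant C such that `‖L f‖₁ ≤ C ‖f‖₂` for all f ∈ L²(ℝ). -/
theorem stmt12 (a : ℝ) (ha : 0 < a) (g : ℝ → ℂ)
    (hg : MemLp g 2 (volume : Measure ℝ)) :
    IsLeast
      {C : ℝ | 0 ≤ C ∧ ∀ f : ℝ → ℂ, MemLp f 2 (volume : Measure ℝ) →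
        (∫ t in Set.Ioc 0 a, ‖aInner a f g t‖) ≤ C * Real.sqrt (∫ t : ℝ, ‖f t‖ ^ 2)}
      (Real.sqrt (∫ t : ℝ, ‖g t‖ ^ 2)) := by
  refine ⟨⟨Real.sqrt_nonneg _, fun f hf ↦ setIntegral_Ioc_norm_aInner_le ha hf hg⟩, ?_⟩
  rintro C ⟨hC, hCg⟩
  have hgg := hCg g hg
  rw [setIntegral_Ioc_norm_aInner_self ha hg] at hgg
  have hsq :=
    Real.mul_self_sqrt (integral_nonneg fun t ↦ by positivity : 0 ≤ ∫ t, ‖g t‖ ^ 2)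
  nlinarith [Real.sqrt_nonneg (∫ t, ‖g t‖ ^ 2)]
end
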